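/- Let i ≥ 2 and let P_i(ω) = Σ_{s=0}^{i-1} (4ω)^{i-1-s} C(2s,s), and define G_i(ω) = P_i(ω)² - C(2i-1, i-1) * (P_i(ω) + (3/2) P_i'(ω)). Then G_i(1) = 0 and G_i(ω) > 0 for all real ω > 1. -/

import Mathlib

/-!
`P_i` is a polynomial in `ω` of degree `i - 1` with nonnegative coefficients, and
`P_{n+1}(ω) = 4ω P_n(ω) + C(2n,n)`. Induction on this recursion gives
`P_{n+1}(1) = (2n+1) C(2n,n)` and `3 P_{n+1}'(1) = 2n(2n+1) C(2n,n)`, which together with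
`(n+1) K = (2n+1) C(2n,n)` for `K = C(2n+1,n)` make `G_{n+1}(1)` vanish. For `ω ≥ 1` the
nonnegative coefficients give `P ≥ P(1)`, `P' ≥ P'(1) > 0` and the degree bound `ω P'' ≤ n P'`,
hence `G' = P' (2P - K) - (3/2) K P'' ≥ P' (2 P(1) - K (1 + 3n/2)) > 0`, so `G_{n+1}` increases
strictly on `[1, ∞)`.
-/

/-- `P_i(ω) = ∑_{s=0}^{i-1} (4ω)^{i-1-s} C(2s,s)`. -/
noncomputable def Ppoly (i : ℕ) (ω : ℝ) : ℝ :=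
  ∑ s ∈ Finset.range i, (4 * ω) ^ (i - 1 - s) * (Nat.choose (2 * s) s : ℝ)

/-- `G_i(ω) = P_i(ω)² - C(2i-1,i-1) (P_i(ω) + (3/2) P_i'(ω))`. -/
noncomputable def Gpoly (i : ℕ) (ω : ℝ) : ℝ :=
  Ppoly i ω ^ 2 -
    (Nat.choose (2 * i - 1) (i - 1) : ℝ) * (Ppoly i ω + 3 / 2 * deriv (Ppoly i) ω)

open Polynomial Finset

namespace Polynomial

variable {R : Type*} [CommSemiring R] [PartialOrder R] [IsOrderedRing R] {p : R[X]}

theorem eval_le_eval_of_coeff_nonneg (hp : ∀ k, 0 ≤ p.coeff k) {x y : R} (hx : 0 ≤ x)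
    (hxy : x ≤ y) : p.eval x ≤ p.eval y := by
  simp only [eval_eq_sum, Polynomial.sum]
  exact sum_le_sum fun k _ => mul_le_mul_of_nonneg_left (pow_le_pow_left₀ hx hxy k) (hp k)

theorem eval_nonneg_of_coeff_nonneg (hp : ∀ k, 0 ≤ p.coeff k) {x : R} (hx : 0 ≤ x) :
    0 ≤ p.eval x := by
  have h0 : 0 ≤ p.eval 0 := coeff_zero_eq_eval_zero p ▸ hp 0
  exact h0.trans (eval_le_eval_of_coeff_nonneg hp le_rfl hx)

theorem coeff_derivative_nonneg (hp : ∀ k, 0 ≤ p.coeff k) (k : ℕ) :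
    0 ≤ p.derivative.coeff k := by
  rw [coeff_derivative]
  exact mul_nonneg (hp _) (add_nonneg (Nat.cast_nonneg _) zero_le_one)

theorem mul_eval_derivative_le (hp : ∀ k, 0 ≤ p.coeff k) {d : ℕ} (hd : p.natDegree ≤ d)
    {x : R} (hx : 0 ≤ x) : x * p.derivative.eval x ≤ d * p.eval x := by
  rw [derivative_eval, eval_eq_sum, Polynomial.sum, Polynomial.sum, mul_sum, mul_sum]
  refine sum_le_sum fun k hk => ?_
  rcases k with _ | k
  · simpa using mul_nonneg (Nat.cast_nonneg d) (hp 0)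
  · have hkd : ((k + 1 : ℕ) : R) ≤ d :=
      Nat.mono_cast ((le_natDegree_of_mem_supp _ hk).trans hd)
    calc x * (p.coeff (k + 1) * ((k + 1 : ℕ) : R) * x ^ (k + 1 - 1))
        = ((k + 1 : ℕ) : R) * (p.coeff (k + 1) * x ^ (k + 1)) := by
          rw [Nat.add_sub_cancel, pow_succ]; ring
      _ ≤ d * (p.coeff (k + 1) * x ^ (k + 1)) :=
          mul_le_mul_of_nonneg_right hkd (mul_nonneg (hp _) (pow_nonneg hx _))

end Polynomial

noncomputable def Ppolynomial (i : ℕ) : ℝ[X] :=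
  ∑ s ∈ range i, monomial (i - 1 - s) (4 ^ (i - 1 - s) * (Nat.choose (2 * s) s : ℝ))

theorem eval_Ppolynomial (i : ℕ) (ω : ℝ) : (Ppolynomial i).eval ω = Ppoly i ω := by
  simp only [Ppolynomial, Ppoly, eval_finsetSum, eval_monomial, mul_pow]
  exact sum_congr rfl fun s _ => by ring

theorem coeff_Ppolynomial_nonneg (i k : ℕ) : 0 ≤ (Ppolynomial i).coeff k := by
  simp only [Ppolynomial, finsetSum_coeff, coeff_monomial]
  exact sum_nonneg fun s _ => by split_ifs <;> positivity

theorem natDegree_Ppolynomial_le (i : ℕ) : (Ppolynomial i).natDegree ≤ i - 1 :=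
  natDegree_sum_le_of_forall_le _ _ fun s _ => (natDegree_monomial_le _).trans (by omega)

theorem hasDerivAt_Ppoly (i : ℕ) (ω : ℝ) :
    HasDerivAt (Ppoly i) ((Ppolynomial i).derivative.eval ω) ω := by
  simpa only [eval_Ppolynomial] using (Ppolynomial i).hasDerivAt ω

theorem deriv_Ppoly (i : ℕ) : deriv (Ppoly i) = fun ω => (Ppolynomial i).derivative.eval ω :=
  funext fun ω => (hasDerivAt_Ppoly i ω).deriv

theorem Ppoly_succ (n : ℕ) (ω : ℝ) :
    Ppoly (n + 1) ω = 4 * ω * Ppoly n ω + (Nat.choose (2 * n) n : ℝ) := by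
  rw [Ppoly, sum_range_succ, Ppoly, mul_sum, Nat.add_sub_cancel, Nat.sub_self, pow_zero, one_mul]
  refine congrArg (· + _) (sum_congr rfl fun s hs => ?_)
  rw [show n - s = n - 1 - s + 1 by have := mem_range.mp hs; omega, pow_succ]
  ring

theorem eval_derivative_Ppolynomial_succ (n : ℕ) (ω : ℝ) :
    (Ppolynomial (n + 1)).derivative.eval ω
      = 4 * Ppoly n ω + 4 * ω * (Ppolynomial n).derivative.eval ω := by
  have h : HasDerivAt (Ppoly (n + 1))
      (4 * Ppoly n ω + 4 * ω * (Ppolynomial n).derivative.eval ω) ω := by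
    rw [funext (Ppoly_succ n)]
    exact ((((hasDerivAt_id' ω).const_mul 4).fun_mul (hasDerivAt_Ppoly n ω)).add_const
      _).congr_deriv (by ring)
  exact (hasDerivAt_Ppoly (n + 1) ω).unique h

theorem succ_mul_choose_two_mul_succ_succ (n : ℕ) :
    ((n : ℝ) + 1) * ((2 * (n + 1)).choose (n + 1) : ℝ)
      = 2 * (2 * n + 1) * ((2 * n).choose n : ℝ) := by
  exact_mod_cast Nat.succ_mul_centralBinom_succ n

theorem succ_mul_choose_two_mul_add_one (n : ℕ) :
    ((n : ℝ) + 1) * ((2 * n + 1).choose n : ℝ) = (2 * n + 1) * ((2 * n).choose n : ℝ) := by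
  have h := Nat.add_one_mul_choose_eq (2 * n) n
  rw [Nat.choose_symm_half] at h
  exact_mod_cast (h.trans (mul_comm _ _)).symm

theorem Ppoly_succ_one (n : ℕ) : Ppoly (n + 1) 1 = (2 * n + 1) * ((2 * n).choose n : ℝ) := by
  induction n with
  | zero => simp [Ppoly]
  | succ n ih =>
    rw [Ppoly_succ, ih]
    push_cast
    linear_combination (-2 : ℝ) * succ_mul_choose_two_mul_succ_succ n

theorem eval_derivative_Ppolynomial_succ_one (n : ℕ) :
    3 * (Ppolynomial (n + 1)).derivative.eval 1
      = 2 * n * (2 * n + 1) * ((2 * n).choose n : ℝ) := by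
  induction n with
  | zero => simp [Ppolynomial]
  | succ n ih =>
    rw [eval_derivative_Ppolynomial_succ, Ppoly_succ_one]
    push_cast
    linear_combination 4 * ih - 2 * (2 * (n : ℝ) + 3) * succ_mul_choose_two_mul_succ_succ n

theorem Gpoly_succ_one (n : ℕ) : Gpoly (n + 1) 1 = 0 := by
  rw [Gpoly, deriv_Ppoly, Ppoly_succ_one, show 2 * (n + 1) - 1 = 2 * n + 1 by omega,
    Nat.add_sub_cancel]
  linear_combination
    (-(2 * (n : ℝ) + 1) * ((2 * n).choose n : ℝ)) * succ_mul_choose_two_mul_add_one n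
      - (1 / 2) * ((2 * n + 1).choose n : ℝ) * eval_derivative_Ppolynomial_succ_one n

theorem hasDerivAt_Gpoly (i : ℕ) (ω : ℝ) :
    HasDerivAt (Gpoly i)
      (2 * Ppoly i ω * (Ppolynomial i).derivative.eval ω
        - ((2 * i - 1).choose (i - 1) : ℝ) * ((Ppolynomial i).derivative.eval ω
          + 3 / 2 * (Ppolynomial i).derivative.derivative.eval ω)) ω := by
  have hP := hasDerivAt_Ppoly i ω
  have hP' := (Ppolynomial i).derivative.hasDerivAt ω
  rw [show Gpoly i = _ from funext fun ω => by rw [Gpoly, deriv_Ppoly]]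
  exact ((hP.fun_pow 2).fun_sub ((hP.fun_add (hP'.const_mul _)).const_mul _)).congr_deriv
    (by push_cast; ring)

theorem Ppoly_succ_one_le (n : ℕ) {ω : ℝ} (hω : 1 ≤ ω) :
    (2 * n + 1) * ((2 * n).choose n : ℝ) ≤ Ppoly (n + 1) ω := by
  rw [← Ppoly_succ_one, ← eval_Ppolynomial, ← eval_Ppolynomial]
  exact eval_le_eval_of_coeff_nonneg (coeff_Ppolynomial_nonneg _) zero_le_one hω

theorem eval_derivative_Ppolynomial_succ_pos {n : ℕ} (hn : 1 ≤ n) {ω : ℝ} (hω : 1 ≤ ω) :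
    0 < (Ppolynomial (n + 1)).derivative.eval ω := by
  have hc : (0 : ℝ) < (2 * n).choose n := by exact_mod_cast Nat.choose_pos (by omega)
  have hn' : (0 : ℝ) < n := by exact_mod_cast hn
  have h1 : 0 < (Ppolynomial (n + 1)).derivative.eval 1 := by
    have := mul_pos (mul_pos (mul_pos two_pos hn') (by positivity : (0 : ℝ) < 2 * n + 1)) hc
    linarith [eval_derivative_Ppolynomial_succ_one n]
  exact h1.trans_le <| eval_le_eval_of_coeff_nonneg
    (coeff_derivative_nonneg (coeff_Ppolynomial_nonneg _)) zero_le_one hω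

theorem eval_derivative_derivative_Ppolynomial_succ_le (n : ℕ) {ω : ℝ} (hω : 1 ≤ ω) :
    (Ppolynomial (n + 1)).derivative.derivative.eval ω
      ≤ n * (Ppolynomial (n + 1)).derivative.eval ω := by
  have hp' := coeff_derivative_nonneg (coeff_Ppolynomial_nonneg (n + 1))
  have hdeg : (Ppolynomial (n + 1)).derivative.natDegree ≤ n :=
    (natDegree_derivative_le _).trans (by have := natDegree_Ppolynomial_le (n + 1); omega)
  have hω0 : (0 : ℝ) ≤ ω := zero_le_one.trans hω
  nlinarith [mul_eval_derivative_le hp' hdeg hω0,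
    eval_nonneg_of_coeff_nonneg (coeff_derivative_nonneg hp') hω0]

theorem deriv_Gpoly_succ_pos {n : ℕ} (hn : 1 ≤ n) {ω : ℝ} (hω : 1 ≤ ω) :
    0 < 2 * Ppoly (n + 1) ω * (Ppolynomial (n + 1)).derivative.eval ω
      - ((2 * (n + 1) - 1).choose (n + 1 - 1) : ℝ) * ((Ppolynomial (n + 1)).derivative.eval ω
        + 3 / 2 * (Ppolynomial (n + 1)).derivative.derivative.eval ω) := by
  have hc : (0 : ℝ) < (2 * n).choose n := by exact_mod_cast Nat.choose_pos (by omega)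
  have hC0 : (0 : ℝ) ≤ (2 * n + 1).choose n := Nat.cast_nonneg _
  have hC := succ_mul_choose_two_mul_add_one n
  have hP := Ppoly_succ_one_le n hω
  have hP' := eval_derivative_Ppolynomial_succ_pos hn hω
  have hP'' := eval_derivative_derivative_Ppolynomial_succ_le n hω
  rw [show 2 * (n + 1) - 1 = 2 * n + 1 by omega, Nat.add_sub_cancel]
  nlinarith [mul_le_mul_of_nonneg_left hP'' hC0, mul_pos hP' hc]

/-- For `i ≥ 2`, `G_i(1) = 0` and `G_i(ω) > 0` for all real `ω > 1`. -/
theorem statement5 (i : ℕ) (hi : 2 ≤ i) :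
    Gpoly i 1 = 0 ∧ ∀ ω : ℝ, 1 < ω → 0 < Gpoly i ω := by
  obtain ⟨n, rfl⟩ : ∃ n, i = n + 1 := ⟨i - 1, by omega⟩
  refine ⟨Gpoly_succ_one n, fun ω hω => ?_⟩
  have hmono : StrictMonoOn (Gpoly (n + 1)) (Set.Ici 1) := by
    refine strictMonoOn_of_deriv_pos (convex_Ici 1)
      (fun x _ => (hasDerivAt_Gpoly _ x).continuousAt.continuousWithinAt) fun x hx => ?_
    rw [interior_Ici] at hx
    rw [(hasDerivAt_Gpoly _ x).deriv]
    exact deriv_Gpoly_succ_pos (by omega) hx.le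
  simpa only [Gpoly_succ_one] using hmono Set.self_mem_Ici hω.le hω
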